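/- arXiv:2411.04080 — 2 statements merged into one kernel-verified Lean document; each statement's English description precedes it below -/
import Mathlib

section
/- Let N_A, N_B be positive integers, let H_A = (ℂ²)^{⊗N_A} and H_B = (ℂ²)^{⊗N_B}, let |Ψ⟩ be a unit vector in H_A ⊗ H_B, and let s be a nonempty subset of the qubits of H_B. With the concentratable entanglement C(·; s) as seed measure, L^{CE}(|Ψ⟩) ≤ L_global^{CE}(|Ψ⟩) ≤ C(|Ψ⟩; s). -/
open scoped BigOperators ComplexConjugate ComplexOrder

noncomputable section

namespace QIpaper

/-- Inner product `⟨ψ|φ⟩`, conjugate-linear in the first argument. -/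
def braket {I : Type*} [Fintype I] (ψ φ : I → ℂ) : ℂ := ∑ x, conj (ψ x) * φ x

/-- Outer product `|ψ⟩⟨ψ|`. -/
def dm {I : Type*} (ψ : I → ℂ) : Matrix I I ℂ := Matrix.of fun x y => ψ x * conj (ψ y)

open Classical in
/-- Positive semidefinite square root (junk value `0` on non-PSD matrices). -/
def psdSqrt {I : Type*} [Fintype I] [DecidableEq I] (A : Matrix I I ℂ) : Matrix I I ℂ :=
  if h : A.PosSemidef then (h.1.eigenvectorUnitary : Matrix I I ℂ) *
    Matrix.diagonal ((↑) ∘ Real.sqrt ∘ h.1.eigenvalues) * (star h.1.eigenvectorUnitary : Matrix I I ℂ)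
  else 0

/-- The trace norm `‖A‖₁ = tr √(AᴴA)`. -/
def traceNorm {I : Type*} [Fintype I] [DecidableEq I] (A : Matrix I I ℂ) : ℝ :=
  (psdSqrt (A.conjTranspose * A)).trace.re

/-- Fidelity `F(ρ,σ) = tr √(√ρ σ √ρ)`. -/
def fidelity {I : Type*} [Fintype I] [DecidableEq I] (ρ σ : Matrix I I ℂ) : ℝ :=
  (psdSqrt (psdSqrt ρ * σ * psdSqrt ρ)).trace.re

/-- Purity `tr(ρ²)`. -/
def purity {I : Type*} [Fintype I] (ρ : Matrix I I ℂ) : ℝ := ((ρ * ρ).trace).re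

def sigmaX : Matrix (Fin 2) (Fin 2) ℂ := !![0, 1; 1, 0]
def sigmaY : Matrix (Fin 2) (Fin 2) ℂ := !![0, -Complex.I; Complex.I, 0]
def sigmaZ : Matrix (Fin 2) (Fin 2) ℂ := !![1, 0; 0, -1]

/-- `σ_y^{⊗I}` on the qubits indexed by `I`. -/
def sigmaYn {I : Type*} [Fintype I] [DecidableEq I] : Matrix (I → Fin 2) (I → Fin 2) ℂ :=
  Matrix.of fun x y => ∏ k, sigmaY (x k) (y k)

/-- The `n`-tangle `τ(ψ) = |⟨ψ|σ_y^{⊗n}|ψ*⟩|`. -/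
def tangle {I : Type*} [Fintype I] [DecidableEq I] (ψ : (I → Fin 2) → ℂ) : ℝ :=
  ‖∑ x, ∑ y, conj (ψ x) * sigmaYn x y * conj (ψ y)‖

/-- Entrywise complex conjugate of a matrix. -/
def conjM {I J : Type*} (ρ : Matrix I J ℂ) : Matrix I J ℂ := Matrix.of fun x y => conj (ρ x y)

/-- `ρ̃ = σ_y^{⊗n} ρ* σ_y^{⊗n}`. -/
def tildeM {I : Type*} [Fintype I] [DecidableEq I] (ρ : Matrix (I → Fin 2) (I → Fin 2) ℂ) :
    Matrix (I → Fin 2) (I → Fin 2) ℂ := sigmaYn * conjM ρ * sigmaYn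

/-- The Wootters tilde `|ψ̃⟩ = σ_y^{⊗n}|ψ*⟩`. -/
def wtilde {I : Type*} [Fintype I] [DecidableEq I] (ψ : (I → Fin 2) → ℂ) : (I → Fin 2) → ℂ :=
  sigmaYn.mulVec (fun x => conj (ψ x))

/-- Reduced density matrix of the pure state `ψ` on the qubits in `s`
(tracing out the complement). -/
def reduced {n : ℕ} (s : Finset (Fin n)) (ψ : (Fin n → Fin 2) → ℂ) :
    Matrix ({i : Fin n // i ∈ s} → Fin 2) ({i : Fin n // i ∈ s} → Fin 2) ℂ :=
  Matrix.of fun a b => ∑ c : {i : Fin n // i ∉ s} → Fin 2,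
    ψ (fun i => if h : i ∈ s then a ⟨i, h⟩ else c ⟨i, h⟩) *
    conj (ψ (fun i => if h : i ∈ s then b ⟨i, h⟩ else c ⟨i, h⟩))

/-- GME-concurrence `C_GME(ψ) = min_{∅ ⊊ γ ⊊ [n]} √(2(1 − tr ψ_γ²))`. -/
def gme {n : ℕ} (ψ : (Fin n → Fin 2) → ℂ) : ℝ :=
  sInf {r : ℝ | ∃ γ : Finset (Fin n), γ ≠ ∅ ∧ γ ≠ Finset.univ ∧
    r = Real.sqrt (2 * (1 - purity (reduced γ ψ)))}

/-- Concentratable entanglement `C(ψ; s) = 1 − 2^{−|s|} Σ_{γ⊆s} tr(ψ_γ²)`. -/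
def CE {n : ℕ} (ψ : (Fin n → Fin 2) → ℂ) (s : Finset (Fin n)) : ℝ :=
  1 - (1 / 2 ^ s.card) * ∑ γ ∈ s.powerset, purity (reduced γ ψ)

/-- The subnormalized post-measurement vector `(⟨v|⊗I)|Ψ⟩`. -/
def contract {IA IB : Type*} [Fintype IA] (v : IA → ℂ) (Ψ : IA × IB → ℂ) : IB → ℂ :=
  fun y => ∑ x, conj (v x) * Ψ (x, y)

/-- Probability `p_v = ⟨Ψ|(|v⟩⟨v| ⊗ I)|Ψ⟩` of outcome `v`. -/
def prob {IA IB : Type*} [Fintype IA] [Fintype IB] (v : IA → ℂ) (Ψ : IA × IB → ℂ) : ℝ :=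
  (braket (contract v Ψ) (contract v Ψ)).re

/-- Normalized post-measurement state (the zero vector when the probability vanishes). -/
def postState {IA IB : Type*} [Fintype IA] [Fintype IB] (v : IA → ℂ) (Ψ : IA × IB → ℂ) :
    IB → ℂ := fun y => ((Real.sqrt (prob v Ψ) : ℂ))⁻¹ * contract v Ψ y

/-- `b` is an orthonormal family. (An orthonormal family indexed by the space's own
index type is an orthonormal basis.) -/
def ONB {J I : Type*} [Fintype I] [DecidableEq J] (b : J → I → ℂ) : Prop :=
  ∀ i j, braket (b i) (b j) = if i = j then 1 else 0

/-- Average post-measurement entanglement `Ē_β(Ψ) = Σ_i p_i E(φ_i)`. -/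
def avgE {ι IA IB : Type*} [Fintype ι] [Fintype IA] [Fintype IB]
    (E : (IB → ℂ) → ℝ) (b : ι → IA → ℂ) (Ψ : IA × IB → ℂ) : ℝ :=
  ∑ i, prob (b i) Ψ * E (postState (b i) Ψ)

/-- Multipartite entanglement of assistance: supremum of `Ē_β` over all
orthonormal bases `β` of `H_A`. -/
def Lglobal {IA IB : Type*} [Fintype IA] [Fintype IB] [DecidableEq IA]
    (E : (IB → ℂ) → ℝ) (Ψ : IA × IB → ℂ) : ℝ :=
  sSup {r : ℝ | ∃ b : IA → IA → ℂ, ONB b ∧ r = avgE E b Ψ}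

/-- Tensor-product basis of `(ℂ²)^{⊗K}` built from single-qubit bases. -/
def productBasis {K : Type*} [Fintype K] (q : K → Fin 2 → Fin 2 → ℂ) :
    (K → Fin 2) → (K → Fin 2) → ℂ :=
  fun i x => ∏ k, q k (i k) (x k)

/-- Localizable multipartite entanglement: supremum of `Ē_β` over product bases of
single-qubit orthonormal bases of `H_A = (ℂ²)^{⊗K}`. -/
def Lloc {K IB : Type*} [Fintype K] [DecidableEq K] [Fintype IB]
    (E : (IB → ℂ) → ℝ) (Ψ : (K → Fin 2) × IB → ℂ) : ℝ :=
  sSup {r : ℝ | ∃ q : K → Fin 2 → Fin 2 → ℂ, (∀ k, ONB (q k)) ∧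
    r = avgE E (productBasis q) Ψ}

/-- Partial trace over the `A` system of `|Ψ⟩⟨Ψ|`. -/
def ptraceA {IA IB : Type*} [Fintype IA] (Ψ : IA × IB → ℂ) : Matrix IB IB ℂ :=
  Matrix.of fun y y' => ∑ x, Ψ (x, y) * conj (Ψ (x, y'))

/-- Reduced density matrix of `|Ψ⟩⟨Ψ|` on the subset `s` of the `B` qubits. -/
def reducedB {IA : Type*} [Fintype IA] {n : ℕ} (s : Finset (Fin n))
    (Ψ : IA × (Fin n → Fin 2) → ℂ) :
    Matrix ({i : Fin n // i ∈ s} → Fin 2) ({i : Fin n // i ∈ s} → Fin 2) ℂ :=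
  Matrix.of fun a b => ∑ x : IA, ∑ c : {i : Fin n // i ∉ s} → Fin 2,
    Ψ (x, fun i => if h : i ∈ s then a ⟨i, h⟩ else c ⟨i, h⟩) *
    conj (Ψ (x, fun i => if h : i ∈ s then b ⟨i, h⟩ else c ⟨i, h⟩))


/-- Concentratable entanglement of a joint state `Ψ ∈ H_A ⊗ (ℂ²)^{⊗n}` with respect to a
subset `s` of the `B` qubits: `C(Ψ; s) = 1 − 2^{−|s|} Σ_{γ⊆s} tr(Ψ_γ²)`. -/
def CEjoint {IA : Type*} [Fintype IA] {n : ℕ} (Ψ : IA × (Fin n → Fin 2) → ℂ)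
    (s : Finset (Fin n)) : ℝ :=
  1 - (1 / 2 ^ s.card) * ∑ γ ∈ s.powerset, purity (reducedB γ Ψ)

/- Measuring `A` in an orthonormal basis splits the reduced state of `B` as
`Ψ_γ = ∑ᵢ pᵢ φᵢ_γ`, by completeness of the basis. Since `tr ρ² = ‖ρ‖²` (Frobenius norm) for
Hermitian `ρ`, the triangle inequality and Cauchy–Schwarz give
`tr Ψ_γ² ≤ (∑ᵢ pᵢ ‖φᵢ_γ‖)² ≤ ∑ᵢ pᵢ tr φᵢ_γ²`: on average the measurement can only increase the
purities, and `C(·; s)` is affine and decreasing in them. Product bases are orthonormal, so the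
localizable supremum runs over a smaller set. -/

open scoped Matrix

attribute [local instance] Matrix.frobeniusNormedAddCommGroup Matrix.frobeniusNormedSpace

theorem _root_.Matrix.frobenius_norm_sq {m n : Type*} [Fintype m] [Fintype n] (A : Matrix m n ℂ) :
    ‖A‖ ^ 2 = ∑ i, ∑ j, ‖A i j‖ ^ 2 := by
  rw [Matrix.frobenius_norm_def, ← Real.sqrt_eq_rpow, Real.sq_sqrt (by positivity)]
  simp only [Real.rpow_two]

theorem trace_dm {I : Type*} [Fintype I] (ψ : I → ℂ) : (dm ψ).trace = braket ψ ψ := by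
  simp [dm, braket, Matrix.trace, mul_comm]

theorem trace_ptraceA {IA IB : Type*} [Fintype IA] [Fintype IB] (Ψ : IA × IB → ℂ) :
    (ptraceA Ψ).trace = braket Ψ Ψ := by
  simp [ptraceA, braket, Matrix.trace, Fintype.sum_prod_type, Finset.sum_comm (γ := IA), mul_comm]

section Orthonormal

variable {IA IB : Type*} [Fintype IA] [DecidableEq IA] {b : IA → IA → ℂ}

theorem ONB.sum_conj_mul_eq_ite (hb : ONB b) (x x' : IA) :
    ∑ i, conj (b i x) * b i x' = if x = x' then 1 else 0 := by
  have hrows : Matrix.of b * (Matrix.of b)ᴴ = 1 := by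
    ext i j
    simpa [Matrix.mul_apply, braket, Matrix.one_apply, apply_ite conj] using
      congrArg conj (hb i j)
  have hcols : (Matrix.of b)ᴴ * Matrix.of b = 1 := mul_eq_one_comm.mp hrows
  simpa [Matrix.mul_apply, Matrix.one_apply] using congrFun (congrFun hcols x) x'

theorem ONB.sum_dm_contract (hb : ONB b) (Ψ : IA × IB → ℂ) :
    ∑ i, dm (contract (b i) Ψ) = ptraceA Ψ := by
  ext y y'
  simp only [Matrix.sum_apply, dm, ptraceA, contract, Matrix.of_apply, map_sum, map_mul,
    Complex.conj_conj, Finset.sum_mul, Finset.mul_sum]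
  calc ∑ i, ∑ x', ∑ x, conj (b i x) * Ψ (x, y) * (b i x' * conj (Ψ (x', y')))
      = ∑ x', ∑ x, (∑ i, conj (b i x) * b i x') * (Ψ (x, y) * conj (Ψ (x', y'))) := by
        conv_lhs => rw [Finset.sum_comm]
        refine Finset.sum_congr rfl fun x' _ => ?_
        rw [Finset.sum_comm]
        refine Finset.sum_congr rfl fun x _ => ?_
        rw [Finset.sum_mul]
        exact Finset.sum_congr rfl fun i _ => by ring
    _ = ∑ x, Ψ (x, y) * conj (Ψ (x, y')) := by
        simp [hb.sum_conj_mul_eq_ite, ite_mul]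

theorem ONB.sum_prob [Fintype IB] (hb : ONB b) (Ψ : IA × IB → ℂ) :
    ∑ i, prob (b i) Ψ = (braket Ψ Ψ).re := by
  simp only [prob, ← trace_dm, ← Complex.re_sum, ← Matrix.trace_sum, hb.sum_dm_contract,
    trace_ptraceA]

theorem ONB.reducedB_eq_sum {n : ℕ} (hb : ONB b) (γ : Finset (Fin n))
    (Ψ : IA × (Fin n → Fin 2) → ℂ) :
    reducedB γ Ψ = ∑ i, reduced γ (contract (b i) Ψ) := by
  ext a a'
  have h := fun y y' => congrFun (congrFun (hb.sum_dm_contract Ψ) y) y'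
  simp only [Matrix.sum_apply, dm, ptraceA, Matrix.of_apply] at h
  simp only [reducedB, reduced, Matrix.sum_apply, Matrix.of_apply]
  rw [Finset.sum_comm]
  conv_rhs => rw [Finset.sum_comm]
  simp only [h]

end Orthonormal

section PostMeasurement

variable {IA IB : Type*} [Fintype IA] [Fintype IB]

theorem re_braket_self (ψ : IB → ℂ) : (braket ψ ψ).re = ∑ y, Complex.normSq (ψ y) := by
  simp [braket, Complex.re_sum, Complex.normSq_apply]

theorem prob_nonneg (v : IA → ℂ) (Ψ : IA × IB → ℂ) : 0 ≤ prob v Ψ := by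
  rw [prob, re_braket_self]
  exact Finset.sum_nonneg fun _ _ => Complex.normSq_nonneg _

theorem contract_eq_zero_of_prob_eq_zero {v : IA → ℂ} {Ψ : IA × IB → ℂ} (h : prob v Ψ = 0) :
    contract v Ψ = 0 := by
  rw [prob, re_braket_self,
    Finset.sum_eq_zero_iff_of_nonneg fun _ _ => Complex.normSq_nonneg _] at h
  funext y
  simpa using h y (Finset.mem_univ y)

theorem sqrt_prob_mul_postState (v : IA → ℂ) (Ψ : IA × IB → ℂ) :
    (fun y => (√(prob v Ψ) : ℂ) * postState v Ψ y) = contract v Ψ := by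
  funext y
  by_cases hp : prob v Ψ = 0
  · simp [hp, contract_eq_zero_of_prob_eq_zero hp]
  · have hsqrt : (√(prob v Ψ) : ℂ) ≠ 0 := by
      exact_mod_cast (Real.sqrt_pos.2 ((prob_nonneg v Ψ).lt_of_ne' hp)).ne'
    simp [postState, hsqrt]

theorem reduced_const_mul {n : ℕ} (γ : Finset (Fin n)) (c : ℂ) (ψ : (Fin n → Fin 2) → ℂ) :
    reduced γ (fun y => c * ψ y) = (Complex.normSq c : ℂ) • reduced γ ψ := by
  ext a a'
  simp only [reduced, Matrix.smul_apply, Matrix.of_apply, smul_eq_mul, Finset.mul_sum, map_mul,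
    ← Complex.mul_conj]
  exact Finset.sum_congr rfl fun _ _ => by ring

theorem reduced_contract {n : ℕ} (γ : Finset (Fin n)) (v : IA → ℂ)
    (Ψ : IA × (Fin n → Fin 2) → ℂ) :
    reduced γ (contract v Ψ) = (prob v Ψ : ℂ) • reduced γ (postState v Ψ) := by
  rw [← sqrt_prob_mul_postState, reduced_const_mul, Complex.normSq_ofReal,
    Real.mul_self_sqrt (prob_nonneg v Ψ)]

end PostMeasurement

theorem reduced_isHermitian {n : ℕ} (γ : Finset (Fin n)) (ψ : (Fin n → Fin 2) → ℂ) :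
    (reduced γ ψ).IsHermitian := by
  ext a a'
  simp only [reduced, Matrix.conjTranspose_apply, Matrix.of_apply, star_sum, star_mul',
    Complex.star_def, Complex.conj_conj]
  exact Finset.sum_congr rfl fun _ _ => mul_comm _ _

theorem reducedB_isHermitian {IA : Type*} [Fintype IA] {n : ℕ} (γ : Finset (Fin n))
    (Ψ : IA × (Fin n → Fin 2) → ℂ) : (reducedB γ Ψ).IsHermitian := by
  ext a a'
  simp only [reducedB, Matrix.conjTranspose_apply, Matrix.of_apply, star_sum, star_mul',
    Complex.star_def, Complex.conj_conj]
  exact Finset.sum_congr rfl fun _ _ => Finset.sum_congr rfl fun _ _ => mul_comm _ _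

theorem purity_eq_norm_sq {I : Type*} [Fintype I] {ρ : Matrix I I ℂ} (hρ : ρ.IsHermitian) :
    purity ρ = ‖ρ‖ ^ 2 := by
  rw [Matrix.frobenius_norm_sq, purity, Matrix.trace, Complex.re_sum]
  refine Finset.sum_congr rfl fun a _ => ?_
  simp only [Matrix.diag, Matrix.mul_apply, Complex.re_sum]
  refine Finset.sum_congr rfl fun b _ => ?_
  rw [← hρ.apply b a, Complex.star_def, Complex.mul_conj, Complex.normSq_eq_norm_sq,
    Complex.ofReal_re]

section Measurement

variable {IA : Type*} [Fintype IA] [DecidableEq IA] {b : IA → IA → ℂ} {n : ℕ}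

theorem ONB.purity_reducedB_le (hb : ONB b) (γ : Finset (Fin n))
    (Ψ : IA × (Fin n → Fin 2) → ℂ) :
    purity (reducedB γ Ψ) ≤
      (braket Ψ Ψ).re * ∑ i, prob (b i) Ψ * purity (reduced γ (postState (b i) Ψ)) := by
  set p := fun i => prob (b i) Ψ
  set σ := fun i => reduced γ (postState (b i) Ψ)
  have hp : ∀ i, 0 ≤ p i := fun i => prob_nonneg _ _
  have hsplit : reducedB γ Ψ = ∑ i, (p i : ℂ) • σ i := by
    simp only [hb.reducedB_eq_sum, reduced_contract, p, σ]
  calc purity (reducedB γ Ψ) = ‖∑ i, (p i : ℂ) • σ i‖ ^ 2 := by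
        rw [purity_eq_norm_sq (reducedB_isHermitian γ Ψ), hsplit]
    _ ≤ (∑ i, p i * ‖σ i‖) ^ 2 := by
        gcongr
        refine (norm_sum_le _ _).trans_eq (Finset.sum_congr rfl fun i _ => ?_)
        rw [norm_smul, Complex.norm_real, Real.norm_of_nonneg (hp i)]
    _ ≤ (∑ i, p i) * ∑ i, p i * ‖σ i‖ ^ 2 :=
        Finset.sum_sq_le_sum_mul_sum_of_sq_le_mul _ (fun i _ => hp i)
          (fun i _ => mul_nonneg (hp i) (sq_nonneg _)) fun i _ => le_of_eq (by ring)
    _ = (braket Ψ Ψ).re * ∑ i, p i * purity (σ i) := by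
        simp only [p, σ, hb.sum_prob, purity_eq_norm_sq (reduced_isHermitian _ _)]

theorem ONB.avgE_CE_le_CEjoint (hb : ONB b) (s : Finset (Fin n))
    (Ψ : IA × (Fin n → Fin 2) → ℂ) (hΨ : braket Ψ Ψ = 1) :
    avgE (fun φ => CE φ s) b Ψ ≤ CEjoint Ψ s := by
  have hnorm : (braket Ψ Ψ).re = 1 := by simp [hΨ]
  have hexpand : avgE (fun φ => CE φ s) b Ψ = 1 - 1 / 2 ^ s.card *
      ∑ γ ∈ s.powerset, ∑ i, prob (b i) Ψ * purity (reduced γ (postState (b i) Ψ)) := by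
    simp only [avgE, CE, mul_sub, mul_one, Finset.sum_sub_distrib, hb.sum_prob, hnorm,
      Finset.mul_sum]
    rw [Finset.sum_comm]
    exact congrArg _ (Finset.sum_congr rfl fun _ _ => Finset.sum_congr rfl fun _ _ => by ring)
  rw [hexpand, CEjoint]
  gcongr with γ
  simpa [hnorm] using hb.purity_reducedB_le γ Ψ

end Measurement

theorem onb_single {I : Type*} [Fintype I] [DecidableEq I] :
    ONB (fun i : I => (Pi.single i 1 : I → ℂ)) := by
  intro i j
  by_cases h : i = j <;> simp [braket, Pi.single_apply, h, eq_comm]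

theorem onb_productBasis {K : Type*} [Fintype K] [DecidableEq K] {q : K → Fin 2 → Fin 2 → ℂ}
    (hq : ∀ k, ONB (q k)) : ONB (productBasis q) := by
  intro i j
  calc braket (productBasis q i) (productBasis q j)
      = ∏ k, braket (q k (i k)) (q k (j k)) := by
        simp only [braket, productBasis, map_prod, ← Finset.prod_mul_distrib]
        exact (Fintype.prod_sum fun k t => conj (q k (i k) t) * q k (j k) t).symm
    _ = ∏ k, if i k = j k then 1 else 0 := Finset.prod_congr rfl fun k _ => hq k (i k) (j k)
    _ = if i = j then 1 else 0 := by
        simp only [Finset.prod_ite_zero, Finset.prod_const_one, Finset.mem_univ, true_implies,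
          funext_iff]

theorem Lglobal_le_of_forall_le {IA IB : Type*} [Fintype IA] [DecidableEq IA] [Fintype IB]
    {E : (IB → ℂ) → ℝ} {Ψ : IA × IB → ℂ} {c : ℝ}
    (h : ∀ b : IA → IA → ℂ, ONB b → avgE E b Ψ ≤ c) :
    Lglobal E Ψ ≤ c :=
  csSup_le ⟨_, _, onb_single, rfl⟩ fun _ ⟨b, hb, hr⟩ => hr ▸ h b hb

theorem Lloc_le_Lglobal {K IB : Type*} [Fintype K] [DecidableEq K] [Fintype IB]
    {E : (IB → ℂ) → ℝ} {Ψ : (K → Fin 2) × IB → ℂ} {c : ℝ}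
    (h : ∀ b : (K → Fin 2) → (K → Fin 2) → ℂ, ONB b → avgE E b Ψ ≤ c) :
    Lloc E Ψ ≤ Lglobal E Ψ :=
  csSup_le_csSup ⟨c, fun _ ⟨b, hb, hr⟩ => hr ▸ h b hb⟩
    ⟨_, fun _ i => Pi.single i 1, fun _ => onb_single, rfl⟩
    fun _ ⟨q, hq, hr⟩ => ⟨productBasis q, onb_productBasis hq, hr⟩

theorem ce_localizable_le_assistance_le_ce_general
    (NA NB : ℕ)
    (s : Finset (Fin NB))
    (Ψ : (Fin NA → Fin 2) × (Fin NB → Fin 2) → ℂ) (hΨ : braket Ψ Ψ = 1) :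
    Lloc (fun φ => CE φ s) Ψ ≤ Lglobal (fun φ => CE φ s) Ψ ∧
    Lglobal (fun φ => CE φ s) Ψ ≤ CEjoint Ψ s := by
  have hbound : ∀ b : (Fin NA → Fin 2) → (Fin NA → Fin 2) → ℂ, ONB b →
      avgE (fun φ => CE φ s) b Ψ ≤ CEjoint Ψ s :=
    fun _ hb => hb.avgE_CE_le_CEjoint s Ψ hΨ
  exact ⟨Lloc_le_Lglobal hbound, Lglobal_le_of_forall_le hbound⟩

/-- For a unit vector `Ψ` in `(ℂ²)^{⊗N_A} ⊗ (ℂ²)^{⊗N_B}` and a nonempty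
subset `s` of the `B` qubits, the localizable multipartite entanglement and multipartite
entanglement of assistance with the concentratable entanglement `C(·; s)` as seed measure
satisfy `L^{CE}(Ψ) ≤ L^{CE}_global(Ψ) ≤ C(Ψ; s)`. -/
theorem ce_localizable_le_assistance_le_ce
    (NA NB : ℕ) (hNA : 0 < NA) (hNB : 0 < NB)
    (s : Finset (Fin NB)) (hs : s.Nonempty)
    (Ψ : (Fin NA → Fin 2) × (Fin NB → Fin 2) → ℂ) (hΨ : braket Ψ Ψ = 1) :
    Lloc (fun φ => CE φ s) Ψ ≤ Lglobal (fun φ => CE φ s) Ψ ∧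
    Lglobal (fun φ => CE φ s) Ψ ≤ CEjoint Ψ s :=
  ce_localizable_le_assistance_le_ce_general NA NB s Ψ hΨ

end QIpaper
end
end

section
/- For every unit vector |φ⟩ ∈ ℂ² ⊗ ℂ², the concentratable entanglement with respect to both qubits satisfies C(|φ⟩; {1,2}) = (1/2)(1 − tr(φ₁²)) = (1/4)·E(|φ⟩)², where φ₁ is the reduced density matrix of |φ⟩⟨φ| on the first qubit and E(|φ⟩) = |⟨φ|σ_y ⊗ σ_y|φ*⟩| is the two-qubit concurrence. -/
open scoped BigOperators ComplexConjugate ComplexOrder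

noncomputable section

namespace QIpaper

/-! Arrange the amplitudes of `φ` as a `2 × 2` matrix `M`. The one-qubit marginals are `M Mᴴ` and
`Mᵀ (Mᵀ)ᴴ`, both of trace `⟨φ|φ⟩ = 1` and determinant `|det M|²`; since `tr A² = (tr A)² − 2 det A`
for `2 × 2` matrices (Cayley–Hamilton), both have purity `1 − 2 |det M|²`, while the empty and the
full subset have purity `1`. Averaging gives `C(φ; {1,2}) = |det M|²`, and on the other side
`⟨φ|σ_y ⊗ σ_y|φ*⟩ = −2 conj (det M)`. -/

open scoped Matrix

section Purity

variable {I J : Type*} [Fintype I] [Fintype J]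

lemma trace_submatrix_equiv {R : Type*} [AddCommMonoid R] (A : Matrix I I R) (e : J ≃ I) :
    (A.submatrix e e).trace = A.trace :=
  e.sum_comp fun i => A i i

lemma purity_submatrix_equiv (A : Matrix I I ℂ) (e : J ≃ I) :
    purity (A.submatrix e e) = purity A := by
  rw [purity, Matrix.submatrix_mul_equiv, trace_submatrix_equiv, purity]

lemma purity_of_unique [Unique I] (A : Matrix I I ℂ) : purity A = (A default default ^ 2).re := by
  simp [purity, Matrix.trace, Matrix.mul_apply, sq]

lemma purity_dm (v : I → ℂ) : purity (dm v) = (braket v v ^ 2).re := by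
  have h : (dm v * dm v).trace = braket v v ^ 2 := by
    simp only [Matrix.trace, Matrix.diag_apply, Matrix.mul_apply, dm, Matrix.of_apply, braket,
      sq, Finset.sum_mul_sum]
    rw [Finset.sum_comm]
    exact Fintype.sum_congr _ _ fun x => Fintype.sum_congr _ _ fun y => by ring
  rw [purity, h]

lemma trace_mul_self_fin_two {R : Type*} [CommRing R] (A : Matrix (Fin 2) (Fin 2) R) :
    (A * A).trace = A.trace ^ 2 - 2 * A.det := by
  simp only [Matrix.trace_fin_two, Matrix.det_fin_two, Matrix.mul_apply, Fin.sum_univ_two]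
  ring

lemma purity_mul_conjTranspose_fin_two (M : Matrix (Fin 2) (Fin 2) ℂ) :
    purity (M * Mᴴ) = ((M * Mᴴ).trace ^ 2).re - 2 * Complex.normSq M.det := by
  rw [purity, trace_mul_self_fin_two, Matrix.det_mul, Matrix.det_conjTranspose, Complex.sub_re,
    Complex.star_def, Complex.mul_conj, ← Complex.ofReal_ofNat, ← Complex.ofReal_mul,
    Complex.ofReal_re]

end Purity

section Extremes

variable {n : ℕ}

def univArrowEquiv :
    ({i : Fin n // i ∈ (Finset.univ : Finset (Fin n))} → Fin 2) ≃ (Fin n → Fin 2) :=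
  (Equiv.subtypeUnivEquiv Finset.mem_univ).arrowCongr (Equiv.refl _)

lemma reduced_empty_apply (ψ : (Fin n → Fin 2) → ℂ) (a b) :
    reduced (∅ : Finset (Fin n)) ψ a b = braket ψ ψ := by
  simp only [reduced, Matrix.of_apply, Finset.notMem_empty, dite_false, braket]
  exact Fintype.sum_equiv
    ((Equiv.subtypeUnivEquiv Finset.notMem_empty).arrowCongr (Equiv.refl _)) _ _
    fun _ => mul_comm _ _

lemma reduced_univ_eq (ψ : (Fin n → Fin 2) → ℂ) :
    reduced Finset.univ ψ = (dm ψ).submatrix univArrowEquiv univArrowEquiv := by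
  ext a b
  simp only [reduced, dm, Matrix.of_apply, Matrix.submatrix_apply, Finset.mem_univ,
    not_true_eq_false, dite_true, Finset.sum_const, Finset.card_univ, Fintype.card_unique, one_smul]
  rfl

lemma purity_reduced_empty (ψ : (Fin n → Fin 2) → ℂ) :
    purity (reduced (∅ : Finset (Fin n)) ψ) = (braket ψ ψ ^ 2).re := by
  rw [purity_of_unique, reduced_empty_apply]

lemma purity_reduced_univ (ψ : (Fin n → Fin 2) → ℂ) :
    purity (reduced Finset.univ ψ) = (braket ψ ψ ^ 2).re := by
  rw [reduced_univ_eq, purity_submatrix_equiv, purity_dm]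

end Extremes

section TwoQubits

def coeffMatrix (φ : (Fin 2 → Fin 2) → ℂ) : Matrix (Fin 2) (Fin 2) ℂ :=
  Matrix.of fun i j => φ ![i, j]

lemma sum_fin_two_arrow {M : Type*} [AddCommMonoid M] (F : (Fin 2 → Fin 2) → M) :
    ∑ x, F x = ∑ i, ∑ j, F ![i, j] := by
  rw [← (finTwoArrowEquiv (Fin 2)).symm.sum_comp, Fintype.sum_prod_type]
  rfl

variable (φ : (Fin 2 → Fin 2) → ℂ)

lemma trace_coeffMatrix_mul_conjTranspose :
    (coeffMatrix φ * (coeffMatrix φ)ᴴ).trace = braket φ φ := by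
  rw [braket, sum_fin_two_arrow]
  simp only [Matrix.trace, Matrix.diag_apply, Matrix.mul_apply, Matrix.conjTranspose_apply,
    coeffMatrix, Matrix.of_apply, Complex.star_def, mul_comm]

lemma trace_coeffMatrix_transpose_mul_conjTranspose :
    ((coeffMatrix φ)ᵀ * (coeffMatrix φ)ᵀᴴ).trace = braket φ φ := by
  rw [← trace_coeffMatrix_mul_conjTranspose]
  simp only [Matrix.trace, Matrix.diag_apply, Matrix.mul_apply, Matrix.conjTranspose_apply,
    Matrix.transpose_apply]
  exact Finset.sum_comm

instance : Unique {i : Fin 2 // i ∉ ({0} : Finset (Fin 2))} := ⟨⟨⟨1, by decide⟩⟩, by decide⟩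

instance : Unique {i : Fin 2 // i ∉ ({1} : Finset (Fin 2))} := ⟨⟨⟨0, by decide⟩⟩, by decide⟩

lemma reduced_zero_eq : reduced {0} φ = (coeffMatrix φ * (coeffMatrix φ)ᴴ).submatrix
    (Equiv.funUnique _ _) (Equiv.funUnique _ _) := by
  ext a b
  simp only [reduced, Matrix.of_apply, Matrix.submatrix_apply, Matrix.mul_apply,
    Matrix.conjTranspose_apply, coeffMatrix]
  rw [← (Equiv.funUnique _ (Fin 2)).symm.sum_comp]
  refine Fintype.sum_congr _ _ fun k => ?_
  rw [Complex.star_def]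
  congr <;> funext i <;> fin_cases i <;> rfl

lemma reduced_one_eq : reduced {1} φ = ((coeffMatrix φ)ᵀ * (coeffMatrix φ)ᵀᴴ).submatrix
    (Equiv.funUnique _ _) (Equiv.funUnique _ _) := by
  ext a b
  simp only [reduced, Matrix.of_apply, Matrix.submatrix_apply, Matrix.mul_apply,
    Matrix.conjTranspose_apply, Matrix.transpose_apply, coeffMatrix]
  rw [← (Equiv.funUnique _ (Fin 2)).symm.sum_comp]
  refine Fintype.sum_congr _ _ fun k => ?_
  rw [Complex.star_def]
  congr <;> funext i <;> fin_cases i <;> rfl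

lemma purity_reduced_zero :
    purity (reduced {0} φ) = (braket φ φ ^ 2).re - 2 * Complex.normSq (coeffMatrix φ).det := by
  rw [reduced_zero_eq, purity_submatrix_equiv, purity_mul_conjTranspose_fin_two,
    trace_coeffMatrix_mul_conjTranspose]

lemma purity_reduced_one :
    purity (reduced {1} φ) = (braket φ φ ^ 2).re - 2 * Complex.normSq (coeffMatrix φ).det := by
  rw [reduced_one_eq, purity_submatrix_equiv, purity_mul_conjTranspose_fin_two,
    trace_coeffMatrix_transpose_mul_conjTranspose, Matrix.det_transpose]

lemma tangle_eq_two_mul_norm_det : tangle φ = 2 * ‖(coeffMatrix φ).det‖ := by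
  have h : ∑ x, ∑ y, conj (φ x) * sigmaYn x y * conj (φ y) = -2 * conj (coeffMatrix φ).det := by
    simp only [sum_fin_two_arrow, Fin.sum_univ_two, sigmaYn, sigmaY, Fin.prod_univ_two,
      Matrix.of_apply, Matrix.cons_val', Matrix.cons_val_fin_one, Matrix.cons_val_zero,
      Matrix.cons_val_one, coeffMatrix, Matrix.det_fin_two, map_sub, map_mul, mul_neg, neg_mul,
      Complex.I_mul_I]
    ring
  rw [tangle, h, norm_mul, Complex.norm_conj]
  norm_num

lemma CE_univ_fin_two : CE φ Finset.univ = 1 - (purity (reduced ∅ φ) + purity (reduced {0} φ) +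
    purity (reduced {1} φ) + purity (reduced Finset.univ φ)) / 4 := by
  have hpowerset : (Finset.univ : Finset (Fin 2)).powerset = {∅, {0}, {1}, Finset.univ} := by
    decide
  rw [CE, hpowerset, Finset.sum_insert (by decide), Finset.sum_insert (by decide),
    Finset.sum_insert (by decide), Finset.sum_singleton, Finset.card_univ, Fintype.card_fin]
  ring

end TwoQubits

/-- For every two-qubit unit vector `φ`, the concentratable entanglement
with respect to both qubits satisfies
`C(φ; {1,2}) = (1/2)(1 − tr(φ₁²)) = (1/4)E(φ)²`, where `φ₁` is the reduced state on the
first qubit and `E` is the two-qubit concurrence `E(φ) = |⟨φ|σ_y⊗σ_y|φ*⟩|` (the 2-tangle). -/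
theorem two_qubit_ce_eq_concurrence_sq
    (φ : (Fin 2 → Fin 2) → ℂ) (hφ : braket φ φ = 1) :
    CE φ Finset.univ = (1 / 2) * (1 - purity (reduced ({0} : Finset (Fin 2)) φ)) ∧
    CE φ Finset.univ = (1 / 4) * tangle φ ^ 2 := by
  rw [CE_univ_fin_two, purity_reduced_empty, purity_reduced_zero, purity_reduced_one,
    purity_reduced_univ, tangle_eq_two_mul_norm_det, hφ, mul_pow, Complex.sq_norm]
  simp only [one_pow, Complex.one_re]
  constructor <;> ring

end QIpaper
end
end
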